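/- Let ψ, φ ∈ ℝ^d be descending probability vectors with all entries strictly positive such that ψ is not majorized by φ, let φ^∧ = ψ∧φ, and let q_j, l_j (j = 1,…,k) be given by the recursive construction for (ψ, φ). Define the two intermediate vectors φ^f_i = q_j φ_i and φ^t_i = q_j (φ^∧)_i for i ∈ {l_j,…,l_{j−1}−1}, j ∈ {1,…,k}. Then ∑_{i=1}^d φ^t_i = 1 and φ^t ≺ φ^f: the intermediate vector of the thrifty protocol is more coherent than (majorized by) that of the greedy protocol. -/

import Mathlib

open Finset

/-- Tail-sum coherence monotone `C_l(p) = ∑_{i=l}^d p_i`, for a vector with (1-based)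
entries `p 1, …, p d`.  Note `Cm d p (d+1) = 0` automatically. -/
noncomputable def Cm (d : ℕ) (p : ℕ → ℝ) (l : ℕ) : ℝ := ∑ i ∈ Finset.Icc l d, p i

/-- `p` is a descending probability vector on the (1-based) index range `{1, …, d}`. -/
structure DescProb (d : ℕ) (p : ℕ → ℝ) : Prop where
  nonneg : ∀ i, 1 ≤ i → i ≤ d → 0 ≤ p i
  anti : ∀ i j, 1 ≤ i → i ≤ j → j ≤ d → p j ≤ p i
  sum_one : ∑ i ∈ Finset.Icc 1 d, p i = 1

/-- `p ≺ q` : `p` is majorized by `q` (both regarded as descending vectors on `{1, …, d}`). -/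
def MajorizedBy (d : ℕ) (p q : ℕ → ℝ) : Prop :=
  (∀ k, 1 ≤ k → k ≤ d → ∑ i ∈ Finset.Icc 1 k, p i ≤ ∑ i ∈ Finset.Icc 1 k, q i) ∧
    ∑ i ∈ Finset.Icc 1 d, p i = ∑ i ∈ Finset.Icc 1 d, q i

/-- The ratio `(C_l(ψ) - C_prev(ψ)) / (C_l(φ) - C_prev(φ))` appearing in the recursive
construction of the intermediate vector. -/
noncomputable def ratio (d : ℕ) (ψ φ : ℕ → ℝ) (prev l : ℕ) : ℝ :=
  (Cm d ψ l - Cm d ψ prev) / (Cm d φ l - Cm d φ prev)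

/-- One step of the recursion: the minimal ratio over `l ∈ {1, …, prev - 1}`. -/
noncomputable def stepQ (d : ℕ) (ψ φ : ℕ → ℝ) (prev : ℕ) : ℝ :=
  sInf {x : ℝ | ∃ l, 1 ≤ l ∧ l ≤ prev - 1 ∧ x = ratio d ψ φ prev l}

/-- One step of the recursion: the smallest `l ∈ {1, …, prev - 1}` attaining the minimal
ratio. -/
noncomputable def stepL (d : ℕ) (ψ φ : ℕ → ℝ) (prev : ℕ) : ℕ :=
  sInf {l : ℕ | 1 ≤ l ∧ l ≤ prev - 1 ∧ ratio d ψ φ prev l = stepQ d ψ φ prev}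

/-- The sequence of indices `l_0 = d + 1 > l_1 > l_2 > ⋯` of the recursive construction. -/
noncomputable def Lseq (d : ℕ) (ψ φ : ℕ → ℝ) : ℕ → ℕ
  | 0 => d + 1
  | j + 1 => stepL d ψ φ (Lseq d ψ φ j)

/-- The sequence of ratios `q_1 < q_2 < ⋯` of the recursive construction (`Qseq d ψ φ j`
is `q_j` for `j ≥ 1`; the value at `0` is irrelevant). -/
noncomputable def Qseq (d : ℕ) (ψ φ : ℕ → ℝ) : ℕ → ℝ
  | 0 => 1
  | j + 1 => stepQ d ψ φ (Lseq d ψ φ j)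

/-- The terminating step `k` of the recursion: the first index `j` with `l_j = 1`. -/
noncomputable def kstop (d : ℕ) (ψ φ : ℕ → ℝ) : ℕ := sInf {j : ℕ | Lseq d ψ φ j = 1}

/-- The intermediate vector `φ^f`, with `φ^f_i = q_j φ_i` for `i ∈ {l_j, …, l_{j-1} - 1}`
(for `i ∈ {1, …, d}`, the smallest `j` with `l_j ≤ i` is precisely the `j` with
`l_j ≤ i ≤ l_{j-1} - 1`). -/
noncomputable def phif (d : ℕ) (ψ φ : ℕ → ℝ) (i : ℕ) : ℝ :=
  Qseq d ψ φ (sInf {j : ℕ | Lseq d ψ φ j ≤ i}) * φ i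

/-- The meet `p ∧ q` of two descending probability vectors in the majorization lattice,
defined componentwise via prefix sums (empty sums are `0`). -/
noncomputable def meet2 (p q : ℕ → ℝ) (i : ℕ) : ℝ :=
  min (∑ j ∈ Finset.Icc 1 i, p j) (∑ j ∈ Finset.Icc 1 i, q j) -
    min (∑ j ∈ Finset.Icc 1 (i - 1), p j) (∑ j ∈ Finset.Icc 1 (i - 1), q j)

/-- The intermediate vector `φ^t` of the thrifty protocol, with `φ^t_i = q_j (ψ ∧ φ)_i`
for `i ∈ {l_j, …, l_{j-1} - 1}`. -/
noncomputable def phit (d : ℕ) (ψ φ : ℕ → ℝ) (i : ℕ) : ℝ :=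
  Qseq d ψ φ (sInf {j : ℕ | Lseq d ψ φ j ≤ i}) * meet2 ψ φ i

/-!
On the block `[l_j, l_{j-1})` both intermediate vectors are `q_j` times `φ`, resp. `ψ ∧ φ`.
By induction `C_{l_j}(ψ) ≤ C_{l_j}(φ)`: if this holds at `l_{j-1}`, then the ratio at `l_j`
being at most the ratio at `l = 1` forces it at `l_j`. The tails of `ψ ∧ φ` are
`max (C_l(ψ), C_l(φ))`, so `ψ ∧ φ` and `φ` have the same tails at all breakpoints, and the
choice of `q_j` gives both intermediate vectors the tail `C_{l_j}(ψ)` there; at `l_k = 1`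
this is the total mass `1`. Inside block `j` the tail of `φ^t` exceeds that of `φ^f` by
`q_j (max (C_m(ψ), C_m(φ)) - C_m(φ)) ≥ 0`.
-/
lemma sub_le_sub_of_div_le_div {a b A B : ℝ} (hb : 0 < b) (hbB : b ≤ B) (hBA : B ≤ A)
    (h : a / b ≤ A / B) : B - b ≤ A - a := by
  have hB : 0 < B := hb.trans_le hbB
  have hcross : a * B ≤ A * b := (div_le_div_iff₀ hb hB).1 h
  have hsq : (B - b) * B ≤ (A - a) * B := by
    nlinarith [mul_nonneg (sub_nonneg.2 hBA) (sub_nonneg.2 hbB)]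
  exact le_of_mul_le_mul_right hsq hB

section Tails

variable {d : ℕ} {p : ℕ → ℝ}

lemma Cm_eq_sum_Ico_add {a b : ℕ} (hab : a ≤ b) (hb : b ≤ d + 1) :
    Cm d p a = ∑ i ∈ Ico a b, p i + Cm d p b := by
  simp only [Cm, ← Ico_add_one_right_eq_Icc]
  exact (sum_Ico_consecutive p hab hb).symm

lemma Cm_of_lt {l : ℕ} (h : d < l) : Cm d p l = 0 := by
  rw [Cm, Icc_eq_empty (by omega), sum_empty]

lemma sum_Icc_one_eq_sub_Cm {m : ℕ} (hm : m ≤ d) :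
    ∑ i ∈ Icc 1 m, p i = Cm d p 1 - Cm d p (m + 1) := by
  rw [Cm_eq_sum_Ico_add (p := p) (by omega : 1 ≤ m + 1) (by omega), Ico_add_one_right_eq_Icc]
  ring

lemma Cm_le_Cm_of_le (hp : ∀ i, 1 ≤ i → i ≤ d → 0 ≤ p i) {a b : ℕ} (ha : 1 ≤ a) (hab : a ≤ b) :
    Cm d p b ≤ Cm d p a :=
  sum_le_sum_of_subset_of_nonneg (Icc_subset_Icc hab le_rfl) fun i hi _ => by
    rw [mem_Icc] at hi
    exact hp i (by omega) hi.2

lemma Cm_sub_Cm_pos (hp : ∀ i, 1 ≤ i → i ≤ d → 0 < p i) {a b : ℕ} (ha : 1 ≤ a) (hab : a < b)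
    (hb : b ≤ d + 1) : 0 < Cm d p a - Cm d p b := by
  rw [Cm_eq_sum_Ico_add hab.le hb, add_sub_cancel_right]
  refine sum_pos (fun i hi => ?_) (nonempty_Ico.2 hab)
  rw [mem_Ico] at hi
  exact hp i (by omega) (by omega)

end Tails

section Meet

variable {d : ℕ} {p q : ℕ → ℝ}

lemma sum_Icc_one_meet2 (m : ℕ) :
    ∑ i ∈ Icc 1 m, meet2 p q i = min (∑ i ∈ Icc 1 m, p i) (∑ i ∈ Icc 1 m, q i) := by
  induction m with
  | zero => simp
  | succ m ih =>
    rw [sum_Icc_succ_top (by omega), ih, meet2, Nat.add_sub_cancel]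
    ring

lemma Cm_meet2 (h : ∑ i ∈ Icc 1 d, p i = ∑ i ∈ Icc 1 d, q i) {l : ℕ} (hl : 1 ≤ l)
    (hld : l ≤ d + 1) : Cm d (meet2 p q) l = max (Cm d p l) (Cm d q l) := by
  obtain ⟨m, rfl⟩ : ∃ m, l = m + 1 := ⟨l - 1, by omega⟩
  have hm : m ≤ d := by omega
  have hmeet := sum_Icc_one_eq_sub_Cm (p := meet2 p q) hm
  have hp := sum_Icc_one_eq_sub_Cm (p := p) hm
  have hq := sum_Icc_one_eq_sub_Cm (p := q) hm
  have htotal : Cm d (meet2 p q) 1 = Cm d p 1 := by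
    rw [Cm, sum_Icc_one_meet2, h, min_self, Cm, h]
  have hq1 : Cm d q 1 = Cm d p 1 := h.symm
  rw [sum_Icc_one_meet2, hp, hq, htotal, hq1, min_sub_sub_left] at hmeet
  linarith

end Meet

section Recursion

variable {d : ℕ} {ψ φ : ℕ → ℝ} {prev j : ℕ}

lemma finite_ratio_set (prev : ℕ) :
    {x : ℝ | ∃ l, 1 ≤ l ∧ l ≤ prev - 1 ∧ x = ratio d ψ φ prev l}.Finite :=
  ((Set.finite_Icc 1 (prev - 1)).image (ratio d ψ φ prev)).subset
    (by rintro _ ⟨l, h1, h2, rfl⟩; exact ⟨l, ⟨h1, h2⟩, rfl⟩)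

lemma stepQ_le_ratio {l : ℕ} (hl : 1 ≤ l) (hlp : l < prev) :
    stepQ d ψ φ prev ≤ ratio d ψ φ prev l :=
  csInf_le (finite_ratio_set (d := d) (ψ := ψ) (φ := φ) prev).bddBelow ⟨l, hl, by omega, rfl⟩

lemma exists_ratio_eq_stepQ (h : 2 ≤ prev) :
    ∃ l, 1 ≤ l ∧ l ≤ prev - 1 ∧ ratio d ψ φ prev l = stepQ d ψ φ prev := by
  have hne : {x : ℝ | ∃ l, 1 ≤ l ∧ l ≤ prev - 1 ∧ x = ratio d ψ φ prev l}.Nonempty :=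
    ⟨_, 1, le_rfl, by omega, rfl⟩
  obtain ⟨l, hl, hlp, hx⟩ := hne.csInf_mem (finite_ratio_set prev)
  exact ⟨l, hl, hlp, hx.symm⟩

lemma stepL_spec (h : 2 ≤ prev) :
    1 ≤ stepL d ψ φ prev ∧ stepL d ψ φ prev ≤ prev - 1 ∧
      ratio d ψ φ prev (stepL d ψ φ prev) = stepQ d ψ φ prev :=
  Nat.sInf_mem (exists_ratio_eq_stepQ h)

lemma stepL_le_pred (prev : ℕ) : stepL d ψ φ prev ≤ prev - 1 := by
  rcases Set.eq_empty_or_nonempty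
    {l : ℕ | 1 ≤ l ∧ l ≤ prev - 1 ∧ ratio d ψ φ prev l = stepQ d ψ φ prev} with h | h
  · rw [stepL, h, Nat.sInf_empty]
    exact Nat.zero_le _
  · exact (Nat.sInf_mem h).2.1

lemma Lseq_antitone : Antitone (Lseq d ψ φ) :=
  antitone_nat_of_succ_le fun j => (stepL_le_pred (Lseq d ψ φ j)).trans (Nat.sub_le _ _)

lemma Lseq_le_sub (j : ℕ) : Lseq d ψ φ j ≤ d + 1 - j := by
  induction j with
  | zero => exact le_rfl
  | succ j ih =>
    have := stepL_le_pred (d := d) (ψ := ψ) (φ := φ) (Lseq d ψ φ j)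
    change stepL d ψ φ (Lseq d ψ φ j) ≤ _
    omega

lemma Cm_Lseq_zero (p : ℕ → ℝ) : Cm d p (Lseq d ψ φ 0) = 0 := Cm_of_lt (Nat.lt_succ_self d)

lemma Lseq_le (j : ℕ) : Lseq d ψ φ j ≤ d + 1 := Lseq_antitone (Nat.zero_le j)

lemma exists_Lseq_succ_le_lt {m : ℕ} (hmd : m ≤ d) (hex : ∃ j, Lseq d ψ φ j ≤ m) :
    ∃ j, Lseq d ψ φ (j + 1) ≤ m ∧ m < Lseq d ψ φ j := by
  classical
  obtain ⟨j, hj⟩ : ∃ j, Nat.find hex = j + 1 := by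
    refine Nat.exists_eq_add_one.2 (Nat.pos_of_ne_zero fun h0 => ?_)
    have := Nat.find_spec hex
    rw [h0] at this
    exact absurd this (show ¬ d + 1 ≤ m by omega)
  exact ⟨j, hj ▸ Nat.find_spec hex, not_le.1 (Nat.find_min hex (by omega))⟩

lemma exists_Lseq_eq_one (hd : 1 ≤ d) : ∃ j, Lseq d ψ φ j = 1 := by
  have hex : ∃ j, Lseq d ψ φ j ≤ 1  := ⟨d, (Lseq_le_sub d).trans (by omega)⟩
  obtain ⟨j, h1, h2⟩ := exists_Lseq_succ_le_lt hd hex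
  exact ⟨j + 1, le_antisymm h1 (stepL_spec h2).1⟩

lemma Lseq_kstop (hd : 1 ≤ d) : Lseq d ψ φ (kstop d ψ φ) = 1 :=
  Nat.sInf_mem (exists_Lseq_eq_one hd)

lemma two_le_Lseq_of_lt_kstop (h : j < kstop d ψ φ) : 2 ≤ Lseq d ψ φ j := by
  have hk : Lseq d ψ φ (kstop d ψ φ) = 1 := Nat.sInf_mem (Nat.nonempty_of_pos_sInf (by
    change 0 < kstop d ψ φ
    omega))
  have hne : Lseq d ψ φ j ≠ 1 := Nat.notMem_of_lt_sInf (s := {j | Lseq d ψ φ j = 1}) h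
  have := Lseq_antitone (ψ := ψ) (φ := φ) (d := d) h.le
  omega

lemma Lseq_succ_mem_Ico (h : j < kstop d ψ φ) :
    1 ≤ Lseq d ψ φ (j + 1) ∧ Lseq d ψ φ (j + 1) < Lseq d ψ φ j := by
  have h2 := two_le_Lseq_of_lt_kstop h
  have := stepL_le_pred (d := d) (ψ := ψ) (φ := φ) (Lseq d ψ φ j)
  exact ⟨(stepL_spec h2).1, by change stepL d ψ φ (Lseq d ψ φ j) < _; omega⟩

lemma ratio_Lseq_succ (h : j < kstop d ψ φ) :
    ratio d ψ φ (Lseq d ψ φ j) (Lseq d ψ φ (j + 1)) = Qseq d ψ φ (j + 1) :=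
  (stepL_spec (two_le_Lseq_of_lt_kstop h)).2.2

lemma Cm_stepL_le (hφpos : ∀ i, 1 ≤ i → i ≤ d → 0 < φ i) (hC1 : Cm d ψ 1 = Cm d φ 1)
    (h2 : 2 ≤ prev) (hprev : prev ≤ d + 1) (hinv : Cm d ψ prev ≤ Cm d φ prev) :
    Cm d ψ (stepL d ψ φ prev) ≤ Cm d φ (stepL d ψ φ prev) := by
  obtain ⟨hl, hlp, hratio⟩ := stepL_spec (d := d) (ψ := ψ) (φ := φ) h2
  have hle_one : ratio d ψ φ prev (stepL d ψ φ prev) ≤ ratio d ψ φ prev 1 :=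
    hratio ▸ stepQ_le_ratio le_rfl (by omega)
  have key := sub_le_sub_of_div_le_div (Cm_sub_Cm_pos hφpos hl (by omega) hprev)
    (sub_le_sub_right (Cm_le_Cm_of_le (fun i h1 h2 => (hφpos i h1 h2).le) le_rfl hl) _)
    (by linarith) hle_one
  linarith

lemma Cm_Lseq_le (hφpos : ∀ i, 1 ≤ i → i ≤ d → 0 < φ i) (hC1 : Cm d ψ 1 = Cm d φ 1) :
    ∀ j ≤ kstop d ψ φ, Cm d ψ (Lseq d ψ φ j) ≤ Cm d φ (Lseq d ψ φ j)
  | 0, _ => by rw [Cm_Lseq_zero, Cm_Lseq_zero]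
  | j + 1, h => Cm_stepL_le hφpos hC1 (two_le_Lseq_of_lt_kstop h) (Lseq_le j)
      (Cm_Lseq_le hφpos hC1 j (by omega))

lemma Qseq_succ_nonneg (hψ : ∀ i, 1 ≤ i → i ≤ d → 0 ≤ ψ i)
    (hφpos : ∀ i, 1 ≤ i → i ≤ d → 0 < φ i) (h : j < kstop d ψ φ) : 0 ≤ Qseq d ψ φ (j + 1) := by
  obtain ⟨h1, hlt⟩ := Lseq_succ_mem_Ico h
  rw [← ratio_Lseq_succ h]
  exact div_nonneg (sub_nonneg.2 (Cm_le_Cm_of_le hψ h1 hlt.le))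
    (Cm_sub_Cm_pos hφpos h1 hlt (Lseq_le j)).le

lemma Qseq_succ_mul (hφpos : ∀ i, 1 ≤ i → i ≤ d → 0 < φ i) (h : j < kstop d ψ φ) :
    Qseq d ψ φ (j + 1) * (Cm d φ (Lseq d ψ φ (j + 1)) - Cm d φ (Lseq d ψ φ j)) =
      Cm d ψ (Lseq d ψ φ (j + 1)) - Cm d ψ (Lseq d ψ φ j) := by
  obtain ⟨h1, hlt⟩ := Lseq_succ_mem_Ico h
  rw [← ratio_Lseq_succ h, ratio]
  exact div_mul_cancel₀ _ (Cm_sub_Cm_pos hφpos h1 hlt (Lseq_le j)).ne'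

end Recursion

section BlockWeight

/-- `q_j` for the block `[l_j, l_{j-1})` containing `i`. -/
noncomputable def blockWeight (d : ℕ) (ψ φ : ℕ → ℝ) (i : ℕ) : ℝ :=
  Qseq d ψ φ (sInf {j : ℕ | Lseq d ψ φ j ≤ i})

variable {d : ℕ} {ψ φ : ℕ → ℝ} {j : ℕ}

lemma blockWeight_eq {i : ℕ} (h1 : Lseq d ψ φ (j + 1) ≤ i) (h2 : i < Lseq d ψ φ j) :
    blockWeight d ψ φ i = Qseq d ψ φ (j + 1) := by
  have hmem := Nat.sInf_mem (s := {j : ℕ | Lseq d ψ φ j ≤ i}) ⟨_, h1⟩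
  have hJ : sInf {j : ℕ | Lseq d ψ φ j ≤ i} = j + 1 := by
    refine le_antisymm (Nat.sInf_le h1) (Nat.succ_le_of_lt (not_le.1 fun hle => ?_))
    exact absurd ((Lseq_antitone hle).trans hmem) (not_le.2 h2)
  rw [blockWeight, hJ]

lemma sum_Ico_blockWeight_mul (v : ℕ → ℝ) {a b : ℕ} (ha : Lseq d ψ φ (j + 1) ≤ a)
    (hab : a ≤ b) (hb : b ≤ Lseq d ψ φ j) :
    ∑ i ∈ Ico a b, blockWeight d ψ φ i * v i = Qseq d ψ φ (j + 1) * (Cm d v a - Cm d v b) := by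
  rw [Cm_eq_sum_Ico_add hab (hb.trans (Lseq_le j)), add_sub_cancel_right, mul_sum]
  refine sum_congr rfl fun i hi => ?_
  rw [mem_Ico] at hi
  rw [blockWeight_eq (ha.trans hi.1) (hi.2.trans_le hb)]

lemma Cm_blockWeight_mul_Lseq (hφpos : ∀ i, 1 ≤ i → i ≤ d → 0 < φ i) (v : ℕ → ℝ)
    (hv : ∀ j ≤ kstop d ψ φ, Cm d v (Lseq d ψ φ j) = Cm d φ (Lseq d ψ φ j)) :
    ∀ j ≤ kstop d ψ φ,
      Cm d (fun i => blockWeight d ψ φ i * v i) (Lseq d ψ φ j) = Cm d ψ (Lseq d ψ φ j)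
  | 0, _ => by rw [Cm_Lseq_zero, Cm_Lseq_zero]
  | j + 1, h => by
    obtain ⟨-, hlt⟩ := Lseq_succ_mem_Ico h
    rw [Cm_eq_sum_Ico_add hlt.le (Lseq_le j), sum_Ico_blockWeight_mul v le_rfl hlt.le le_rfl,
      Cm_blockWeight_mul_Lseq hφpos v hv j (by omega), hv (j + 1) h, hv j (by omega),
      Qseq_succ_mul hφpos h]
    ring

end BlockWeight

section Intermediate

variable {d : ℕ} {ψ φ : ℕ → ℝ}

lemma Cm_meet2_Lseq (hd : 1 ≤ d) (hφpos : ∀ i, 1 ≤ i → i ≤ d → 0 < φ i)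
    (hC1 : Cm d ψ 1 = Cm d φ 1) (j : ℕ) (hj : j ≤ kstop d ψ φ) :
    Cm d (meet2 ψ φ) (Lseq d ψ φ j) = Cm d φ (Lseq d ψ φ j) := by
  have hl : 1 ≤ Lseq d ψ φ j := (Lseq_kstop hd).symm.le.trans (Lseq_antitone hj)
  rw [Cm_meet2 hC1 hl (Lseq_le j), max_eq_right (Cm_Lseq_le hφpos hC1 j hj)]

lemma Cm_phit_Lseq (hd : 1 ≤ d) (hφpos : ∀ i, 1 ≤ i → i ≤ d → 0 < φ i)
    (hC1 : Cm d ψ 1 = Cm d φ 1) (j : ℕ) (hj : j ≤ kstop d ψ φ) :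
    Cm d (phit d ψ φ) (Lseq d ψ φ j) = Cm d ψ (Lseq d ψ φ j) :=
  Cm_blockWeight_mul_Lseq hφpos _ (Cm_meet2_Lseq hd hφpos hC1) j hj

lemma Cm_phif_Lseq (hφpos : ∀ i, 1 ≤ i → i ≤ d → 0 < φ i) (j : ℕ) (hj : j ≤ kstop d ψ φ) :
    Cm d (phif d ψ φ) (Lseq d ψ φ j) = Cm d ψ (Lseq d ψ φ j) :=
  Cm_blockWeight_mul_Lseq hφpos _ (fun _ _ => rfl) j hj

lemma Cm_phif_le_Cm_phit (hd : 1 ≤ d) (hψ : ∀ i, 1 ≤ i → i ≤ d → 0 ≤ ψ i)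
    (hφpos : ∀ i, 1 ≤ i → i ≤ d → 0 < φ i) (hC1 : Cm d ψ 1 = Cm d φ 1) {m : ℕ} (hm : 1 ≤ m) :
    Cm d (phif d ψ φ) m ≤ Cm d (phit d ψ φ) m := by
  rcases lt_or_ge d m with hdm | hmd
  · rw [Cm_of_lt hdm, Cm_of_lt hdm]
  have hk := Lseq_kstop (ψ := ψ) (φ := φ) hd
  obtain ⟨j, h1, h2⟩ := exists_Lseq_succ_le_lt (ψ := ψ) (φ := φ) hmd ⟨_, hk.trans_le hm⟩
  have hjk : j < kstop d ψ φ := by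
    by_contra! hkj
    have := Lseq_antitone (d := d) (ψ := ψ) (φ := φ) hkj
    omega
  have hsplit (v : ℕ → ℝ) : Cm d (fun i => blockWeight d ψ φ i * v i) m =
      Qseq d ψ φ (j + 1) * (Cm d v m - Cm d v (Lseq d ψ φ j)) +
        Cm d (fun i => blockWeight d ψ φ i * v i) (Lseq d ψ φ j) := by
    rw [Cm_eq_sum_Ico_add h2.le (Lseq_le j), sum_Ico_blockWeight_mul v h1 h2.le le_rfl]
  have hφ_le_meet : Cm d φ m ≤ Cm d (meet2 ψ φ) m := by
    rw [Cm_meet2 hC1 hm (by omega)]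
    exact le_max_right _ _
  have hq := Qseq_succ_nonneg hψ hφpos hjk
  change Cm d (fun i => blockWeight d ψ φ i * φ i) m ≤
    Cm d (fun i => blockWeight d ψ φ i * meet2 ψ φ i) m
  rw [hsplit, hsplit, Cm_blockWeight_mul_Lseq hφpos _ (fun _ _ => rfl) j hjk.le,
    Cm_blockWeight_mul_Lseq hφpos _ (Cm_meet2_Lseq hd hφpos hC1) j hjk.le,
    Cm_meet2_Lseq hd hφpos hC1 j hjk.le]
  gcongr

end Intermediate

theorem thrifty_intermediate_majorized_general (d : ℕ) (hd : 1 ≤ d) (ψ φ : ℕ → ℝ)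
    (hψ : DescProb d ψ) (hφ : DescProb d φ)
    (hφpos : ∀ i, 1 ≤ i → i ≤ d → 0 < φ i) :
    (∑ i ∈ Finset.Icc 1 d, phit d ψ φ i = 1) ∧
      MajorizedBy d (phit d ψ φ) (phif d ψ φ) := by
  have hC1 : Cm d ψ 1 = Cm d φ 1 := hψ.sum_one.trans hφ.sum_one.symm
  have hk := Lseq_kstop (ψ := ψ) (φ := φ) hd
  have ht : Cm d (phit d ψ φ) 1 = 1 := by
    rw [← hk, Cm_phit_Lseq hd hφpos hC1 _ le_rfl, hk]
    exact hψ.sum_one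
  have hf : Cm d (phif d ψ φ) 1 = 1 := by
    rw [← hk, Cm_phif_Lseq hφpos _ le_rfl, hk]
    exact hψ.sum_one
  refine ⟨ht, fun m hm hmd => ?_, ht.trans hf.symm⟩
  rw [sum_Icc_one_eq_sub_Cm hmd, sum_Icc_one_eq_sub_Cm hmd, ht, hf]
  linarith [Cm_phif_le_Cm_phit hd hψ.nonneg hφpos hC1 (m := m + 1) (by omega)]

/-- If `ψ` is not majorized by `φ`, the intermediate vector `φ^t` of the
thrifty protocol sums to `1` and is majorized by the intermediate vector `φ^f` of the
greedy protocol: `φ^t ≺ φ^f`. -/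
theorem thrifty_intermediate_majorized (d : ℕ) (hd : 1 ≤ d) (ψ φ : ℕ → ℝ)
    (hψ : DescProb d ψ) (hφ : DescProb d φ)
    (hψpos : ∀ i, 1 ≤ i → i ≤ d → 0 < ψ i) (hφpos : ∀ i, 1 ≤ i → i ≤ d → 0 < φ i)
    (hnm : ¬ MajorizedBy d ψ φ) :
    (∑ i ∈ Finset.Icc 1 d, phit d ψ φ i = 1) ∧
      MajorizedBy d (phit d ψ φ) (phif d ψ φ) :=
  thrifty_intermediate_majorized_general d hd ψ φ hψ hφ hφpos
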